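/- Let S, τ > 0 and μ ∈ ℝ. Define r(β) = ∫_ℝ -Δ·Φ(√S·(Δ/S - β))·φ((Δ-μ)/τ) dΔ. Then β* = -μ/τ² is the unique global minimizer of r: for every β ≠ β*, r(β*) < r(β). (Theorem of Section 5: when thresholding the inverse-variance weighted sum Y ~ N(Δ/S, 1/S) under a Gaussian prior Δ ~ N(μ, τ²), the Bayes-optimal threshold is β = -μ/τ², independent of the observation variances.) -/

import Mathlib

open MeasureTheory Real

/-- The standard normal density. -/
noncomputable def stdNormalPDF (t : ℝ) : ℝ := Real.exp (-t ^ 2 / 2) / Real.sqrt (2 * Real.pi)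

/-- The standard normal CDF. -/
noncomputable def stdNormalCDF (t : ℝ) : ℝ := ∫ u in Set.Iic t, stdNormalPDF u

lemma sqrt_two_pi_pos : 0 < Real.sqrt (2 * Real.pi) := Real.sqrt_pos.2 (by positivity)

lemma stdNormalPDF_pos (t : ℝ) : 0 < stdNormalPDF t :=
  div_pos (Real.exp_pos _) sqrt_two_pi_pos

lemma stdNormalPDF_le_one (t : ℝ) : stdNormalPDF t ≤ 1 := by
  unfold stdNormalPDF
  rw [div_le_one sqrt_two_pi_pos]
  calc Real.exp (-t ^ 2 / 2) ≤ 1 := Real.exp_le_one_iff.2 (by nlinarith [sq_nonneg t])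
    _ ≤ Real.sqrt (2 * Real.pi) := by
        rw [show (1:ℝ) = Real.sqrt 1 from (Real.sqrt_one).symm]
        exact Real.sqrt_le_sqrt (by nlinarith [Real.pi_gt_three])

lemma stdNormalPDF_eq (t : ℝ) : stdNormalPDF t
    = Real.exp (-(1/2) * t ^ 2) / Real.sqrt (2 * Real.pi) := by
  unfold stdNormalPDF; ring_nf

lemma integrable_stdNormalPDF : Integrable stdNormalPDF := by
  simp only [funext stdNormalPDF_eq]
  exact (integrable_exp_neg_mul_sq (by norm_num : (0:ℝ) < 1/2)).div_const _

lemma integral_stdNormalPDF : ∫ t, stdNormalPDF t = 1 := by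
  simp only [funext stdNormalPDF_eq]
  rw [integral_div, integral_gaussian]
  rw [show Real.pi / (1/2) = 2 * Real.pi by ring]
  exact div_self sqrt_two_pi_pos.ne'

lemma stdNormalCDF_nonneg (t : ℝ) : 0 ≤ stdNormalCDF t :=
  setIntegral_nonneg measurableSet_Iic fun u _ => (stdNormalPDF_pos u).le

lemma stdNormalCDF_le_one (t : ℝ) : stdNormalCDF t ≤ 1 := by
  rw [← integral_stdNormalPDF]
  exact setIntegral_le_integral integrable_stdNormalPDF
    (Filter.Eventually.of_forall fun u => (stdNormalPDF_pos u).le)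

lemma continuous_stdNormalPDF : Continuous stdNormalPDF := by
  unfold stdNormalPDF; fun_prop

lemma continuous_stdNormalCDF : Continuous stdNormalCDF := by
  have h : stdNormalCDF = fun t => stdNormalCDF 0 + ∫ u in (0:ℝ)..t, stdNormalPDF u := by
    funext t
    rw [← intervalIntegral.integral_Iic_sub_Iic integrable_stdNormalPDF.integrableOn
      integrable_stdNormalPDF.integrableOn]
    unfold stdNormalCDF; ring
  rw [h]
  exact continuous_const.add (intervalIntegral.continuous_primitive
    (fun a b => integrable_stdNormalPDF.intervalIntegrable) 0)

lemma integral_odd_gauss {b : ℝ} : ∫ x : ℝ, x * Real.exp (-b * x ^ 2) = 0 := by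
  have h := integral_neg_eq_self (fun x : ℝ => x * Real.exp (-b * x ^ 2)) (volume : Measure ℝ)
  have h2 : ∫ x : ℝ, -(x * Real.exp (-b * x ^ 2)) = ∫ x : ℝ, x * Real.exp (-b * x ^ 2) := by
    rw [← h]; congr 1; funext x; rw [neg_sq]; ring
  rw [integral_neg] at h2; linarith

lemma integral_mul_gauss_shift {b m : ℝ} (hb : 0 < b) :
    ∫ x : ℝ, x * Real.exp (-b * (x - m) ^ 2) = m * Real.sqrt (Real.pi / b) := by
  have h := integral_add_right_eq_self (μ := (volume : Measure ℝ))
    (fun x : ℝ => x * Real.exp (-b * (x - m) ^ 2)) m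
  rw [← h]
  have : (fun x : ℝ => (x + m) * Real.exp (-b * (x + m - m) ^ 2))
      = fun x : ℝ => x * Real.exp (-b * x ^ 2) + m * Real.exp (-b * x ^ 2) := by
    funext x; rw [add_sub_cancel_right]; ring
  rw [this, integral_add (integrable_mul_exp_neg_mul_sq hb)
    ((integrable_exp_neg_mul_sq hb).const_mul m), integral_odd_gauss,
    MeasureTheory.integral_const_mul, integral_gaussian, zero_add]

lemma integrable_abs_mul_gauss {b : ℝ} (hb : 0 < b) (c : ℝ) :
    Integrable fun x : ℝ => |x| * Real.exp (-b * (x - c) ^ 2) := by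
  have h1 : Integrable fun x : ℝ => |x + c| * Real.exp (-b * x ^ 2) := by
    have hg : Integrable fun x : ℝ =>
        |x| * Real.exp (-b * x ^ 2) + |c| * Real.exp (-b * x ^ 2) := by
      refine Integrable.add ?_ (((integrable_exp_neg_mul_sq hb)).const_mul |c|)
      simpa [abs_mul, abs_of_nonneg (Real.exp_pos _).le]
        using (integrable_mul_exp_neg_mul_sq hb).abs
    refine hg.mono' ?_ (Filter.Eventually.of_forall fun x => ?_)
    · exact ((continuous_abs.comp (continuous_id.add continuous_const)).mul
        (by fun_prop)).aestronglyMeasurable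
    · rw [Real.norm_eq_abs, abs_mul, abs_abs, abs_of_nonneg (Real.exp_pos _).le]
      have := abs_add_le x c
      nlinarith [Real.exp_pos (-b * x ^ 2), abs_nonneg x, abs_nonneg c]
  have h2 := h1.comp_sub_right c
  simpa [sub_add_cancel] using h2

lemma stdNormalPDF_affine {τ : ℝ} (hτ : 0 < τ) (c x : ℝ) :
    stdNormalPDF ((x - c) / τ) =
      Real.exp (-(1/(2*τ^2)) * (x - c)^2) / Real.sqrt (2 * Real.pi) := by
  unfold stdNormalPDF
  congr 2
  rw [div_pow]
  field_simp

lemma integrable_abs_mul_pdf {τ : ℝ} (hτ : 0 < τ) (c : ℝ) :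
    Integrable fun x : ℝ => |x| * stdNormalPDF ((x - c) / τ) := by
  simp only [stdNormalPDF_affine hτ]
  simp only [← mul_div_assoc]
  exact (integrable_abs_mul_gauss (by positivity) c).div_const _

lemma integrable_f {S τ : ℝ} (hS : 0 < S) (hτ : 0 < τ) (μ β : ℝ) :
    Integrable fun Δ : ℝ => -Δ * stdNormalCDF (Real.sqrt S * (Δ / S - β)) *
      stdNormalPDF ((Δ - μ) / τ) := by
  refine (integrable_abs_mul_pdf hτ μ).mono' ?_ (Filter.Eventually.of_forall fun Δ => ?_)
  · exact ((continuous_neg.mul (continuous_stdNormalCDF.comp (by fun_prop))).mul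
      (continuous_stdNormalPDF.comp (by fun_prop))).aestronglyMeasurable
  · rw [Real.norm_eq_abs, abs_mul, abs_mul, abs_neg]
    have h1 : |stdNormalCDF (Real.sqrt S * (Δ / S - β))| ≤ 1 :=
      abs_le.2 ⟨by linarith [stdNormalCDF_nonneg (Real.sqrt S * (Δ / S - β))],
        stdNormalCDF_le_one _⟩
    have h2 : |stdNormalPDF ((Δ - μ) / τ)| = stdNormalPDF ((Δ - μ) / τ) :=
      abs_of_pos (stdNormalPDF_pos _)
    rw [h2]
    calc |Δ| * |stdNormalCDF (Real.sqrt S * (Δ / S - β))| * stdNormalPDF ((Δ - μ) / τ)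
        ≤ |Δ| * 1 * stdNormalPDF ((Δ - μ) / τ) :=
          mul_le_mul_of_nonneg_right
            (mul_le_mul_of_nonneg_left h1 (abs_nonneg Δ)) (stdNormalPDF_pos _).le
      _ = |Δ| * stdNormalPDF ((Δ - μ) / τ) := by ring

lemma g_pointwise {S τ μ : ℝ} (hS : 0 < S) (hτ : 0 < τ) (t Δ : ℝ) :
    Real.sqrt S * Δ * stdNormalPDF (Real.sqrt S * (Δ / S - t)) * stdNormalPDF ((Δ - μ) / τ)
      = (Real.sqrt S / (2 * Real.pi) *
          Real.exp (((1/S + 1/τ^2) * ((t + μ/τ^2) / (1/S + 1/τ^2))^2 - S*t^2 - μ^2/τ^2)/2)) *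
        (Δ * Real.exp (-((1/S + 1/τ^2)/2) * (Δ - (t + μ/τ^2) / (1/S + 1/τ^2))^2)) := by
  set a := 1/S + 1/τ^2 with ha_def
  have ha : 0 < a := by positivity
  set m := (t + μ/τ^2) / a with hm_def
  set C := (a * m^2 - S*t^2 - μ^2/τ^2)/2 with hC_def
  unfold stdNormalPDF
  have hsq : (Real.sqrt S * (Δ / S - t))^2 = S * (Δ / S - t)^2 := by
    rw [mul_pow, Real.sq_sqrt hS.le]
  rw [hsq]
  have key : -(S * (Δ / S - t)^2) / 2 + -((Δ - μ)/τ)^2 / 2 = C + (-(a/2) * (Δ - m)^2) := by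
    rw [hC_def, hm_def, ha_def]
    field_simp
    ring
  have c2 : Real.sqrt (2*Real.pi) * Real.sqrt (2*Real.pi) = 2*Real.pi :=
    Real.mul_self_sqrt (by positivity)
  rw [mul_assoc (Real.sqrt S * Δ), div_mul_div_comm, ← Real.exp_add, key, Real.exp_add, c2]
  ring

lemma g_eq {S τ μ : ℝ} (hS : 0 < S) (hτ : 0 < τ) (t : ℝ) :
    (∫ Δ : ℝ, Real.sqrt S * Δ * stdNormalPDF (Real.sqrt S * (Δ / S - t)) *
        stdNormalPDF ((Δ - μ) / τ))
      = (Real.sqrt S / (2 * Real.pi) *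
          Real.exp (((1/S + 1/τ^2) * ((t + μ/τ^2) / (1/S + 1/τ^2))^2 - S*t^2 - μ^2/τ^2)/2) *
          Real.sqrt (Real.pi / ((1/S + 1/τ^2)/2)) / (1/S + 1/τ^2)) * (t + μ/τ^2) := by
  have ha : 0 < 1/S + 1/τ^2 := by positivity
  simp only [funext fun Δ => g_pointwise (μ := μ) hS hτ t Δ]
  rw [MeasureTheory.integral_const_mul, integral_mul_gauss_shift (by positivity)]
  field_simp

lemma stepA {S τ : ℝ} (hS : 0 < S) (hτ : 0 < τ) (μ b0 β Δ : ℝ) :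
    -Δ * stdNormalCDF (Real.sqrt S * (Δ / S - β)) * stdNormalPDF ((Δ - μ) / τ)
      - (-Δ * stdNormalCDF (Real.sqrt S * (Δ / S - b0)) * stdNormalPDF ((Δ - μ) / τ))
      = ∫ t in b0..β, Real.sqrt S * Δ * stdNormalPDF (Real.sqrt S * (Δ / S - t)) *
          stdNormalPDF ((Δ - μ) / τ) := by
  have hs : (0:ℝ) < Real.sqrt S := Real.sqrt_pos.2 hS
  set A := Real.sqrt S * (Δ / S) with hA
  have hb : ∀ t : ℝ, Real.sqrt S * (Δ / S - t) = A - Real.sqrt S * t := by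
    intro t; rw [hA]; ring
  have hIic : ∀ x : ℝ, IntegrableOn stdNormalPDF (Set.Iic x) :=
    fun x => integrable_stdNormalPDF.integrableOn
  have h1 : stdNormalCDF (A - Real.sqrt S * b0) - stdNormalCDF (A - Real.sqrt S * β)
      = ∫ u in (A - Real.sqrt S * β)..(A - Real.sqrt S * b0), stdNormalPDF u := by
    unfold stdNormalCDF
    exact intervalIntegral.integral_Iic_sub_Iic (hIic _) (hIic _)
  have h2 : (∫ u in (A - Real.sqrt S * β)..(A - Real.sqrt S * b0), stdNormalPDF u)
      = ∫ x in (Real.sqrt S * b0)..(Real.sqrt S * β), stdNormalPDF (A - x) := by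
    rw [intervalIntegral.integral_comp_sub_left (fun u => stdNormalPDF u) A]
  have h3 : (∫ x in (Real.sqrt S * b0)..(Real.sqrt S * β), stdNormalPDF (A - x))
      = Real.sqrt S * ∫ t in b0..β, stdNormalPDF (A - Real.sqrt S * t) := by
    rw [intervalIntegral.integral_comp_mul_left (fun x => stdNormalPDF (A - x)) hs.ne']
    rw [smul_eq_mul, ← mul_assoc, mul_inv_cancel₀ hs.ne', one_mul]
  rw [hb β, hb b0]
  have h4 : -Δ * stdNormalCDF (A - Real.sqrt S * β) * stdNormalPDF ((Δ - μ) / τ)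
      - (-Δ * stdNormalCDF (A - Real.sqrt S * b0) * stdNormalPDF ((Δ - μ) / τ))
      = (Δ * stdNormalPDF ((Δ - μ) / τ)) *
        (stdNormalCDF (A - Real.sqrt S * b0) - stdNormalCDF (A - Real.sqrt S * β)) := by ring
  rw [h4, h1, h2, h3, ← mul_assoc, ← intervalIntegral.integral_const_mul]
  apply intervalIntegral.integral_congr
  intro t _
  simp only [hb]
  ring

lemma fubini_step {S τ : ℝ} (hS : 0 < S) (hτ : 0 < τ) (μ lo hi : ℝ) :
    (∫ Δ : ℝ, ∫ t in Set.Ioc lo hi, Real.sqrt S * Δ *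
        stdNormalPDF (Real.sqrt S * (Δ / S - t)) * stdNormalPDF ((Δ - μ) / τ))
      = ∫ t in Set.Ioc lo hi, ∫ Δ : ℝ, Real.sqrt S * Δ *
          stdNormalPDF (Real.sqrt S * (Δ / S - t)) * stdNormalPDF ((Δ - μ) / τ) := by
  apply MeasureTheory.integral_integral_swap
  have hbound : Integrable
      (fun z : ℝ × ℝ => (Real.sqrt S * (|z.1| * stdNormalPDF ((z.1 - μ) / τ))) * 1)
      ((volume : Measure ℝ).prod ((volume : Measure ℝ).restrict (Set.Ioc lo hi))) := by
    exact Integrable.mul_prod (L := ℝ)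
      ((integrable_abs_mul_pdf hτ μ).const_mul (Real.sqrt S))
      ((integrableOn_const measure_Ioc_lt_top.ne :
        IntegrableOn (fun _ : ℝ => (1:ℝ)) (Set.Ioc lo hi) volume))
  refine hbound.mono' ?_ (Filter.Eventually.of_forall fun z => ?_)
  · apply Continuous.aestronglyMeasurable
    apply Continuous.mul
    apply Continuous.mul
    · exact continuous_const.mul continuous_fst
    · exact continuous_stdNormalPDF.comp (by fun_prop)
    · exact continuous_stdNormalPDF.comp (by fun_prop)
  · simp only [Function.uncurry]
    rw [Real.norm_eq_abs, mul_one]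
    rw [abs_mul, abs_mul, abs_mul,
      abs_of_pos (stdNormalPDF_pos (Real.sqrt S * (z.1 / S - z.2))),
      abs_of_pos (stdNormalPDF_pos ((z.1 - μ) / τ)),
      abs_of_nonneg (Real.sqrt_nonneg S)]
    have h1 := stdNormalPDF_le_one (Real.sqrt S * (z.1 / S - z.2))
    have h2 := (stdNormalPDF_pos ((z.1 - μ) / τ)).le
    calc Real.sqrt S * |z.1| * stdNormalPDF (Real.sqrt S * (z.1 / S - z.2)) *
          stdNormalPDF ((z.1 - μ) / τ)
        ≤ Real.sqrt S * |z.1| * 1 * stdNormalPDF ((z.1 - μ) / τ) :=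
          mul_le_mul_of_nonneg_right
            (mul_le_mul_of_nonneg_left h1 (by positivity)) h2
      _ = Real.sqrt S * (|z.1| * stdNormalPDF ((z.1 - μ) / τ)) := by ring

/-- When thresholding the inverse-variance weighted sum `Y ~ N(Δ/S, 1/S)` under a Gaussian
prior `Δ ~ N(μ, τ²)`, the Bayes-optimal threshold is `β* = -μ/τ²`, independent of the
observation variances: `β*` is the unique global minimizer of the Bayes risk. -/
theorem bayesOptimal_threshold_weightedSum (S τ μ : ℝ) (hS : 0 < S) (hτ : 0 < τ)
    (r : ℝ → ℝ)
    (hr : ∀ β, r β = ∫ Δ : ℝ, -Δ * stdNormalCDF (Real.sqrt S * (Δ / S - β)) *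
        stdNormalPDF ((Δ - μ) / τ)) :
    ∀ β : ℝ, β ≠ -μ / τ ^ 2 → r (-μ / τ ^ 2) < r β := by
  intro β hβ
  set b0 : ℝ := -μ / τ ^ 2 with hb0
  have ha : 0 < 1/S + 1/τ^2 := by positivity
  -- the closed form of the inner integral
  set Q : ℝ → ℝ := fun t => Real.sqrt S / (2 * Real.pi) *
      Real.exp (((1/S + 1/τ^2) * ((t + μ/τ^2) / (1/S + 1/τ^2))^2 - S*t^2 - μ^2/τ^2)/2) *
      Real.sqrt (Real.pi / ((1/S + 1/τ^2)/2)) / (1/S + 1/τ^2) with hQ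
  have hQpos : ∀ t, 0 < Q t := by
    intro t
    rw [hQ]
    have := Real.sqrt_pos.2 hS
    have : 0 < Real.sqrt (Real.pi / ((1/S + 1/τ^2)/2)) := Real.sqrt_pos.2 (by positivity)
    positivity
  set g : ℝ → ℝ := fun t => Q t * (t + μ/τ^2) with hg
  have hgcont : Continuous g := by
    rw [hg, hQ]
    fun_prop (disch := positivity)
  have hginner : ∀ t : ℝ, (∫ Δ : ℝ, Real.sqrt S * Δ *
      stdNormalPDF (Real.sqrt S * (Δ / S - t)) * stdNormalPDF ((Δ - μ) / τ)) = g t :=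
    fun t => g_eq hS hτ t
  -- key identity
  have key : r β - r b0 = ∫ t in b0..β, g t := by
    rw [hr β, hr b0, ← integral_sub (integrable_f hS hτ μ β) (integrable_f hS hτ μ b0)]
    have hpt : (fun Δ : ℝ => -Δ * stdNormalCDF (Real.sqrt S * (Δ / S - β)) *
        stdNormalPDF ((Δ - μ) / τ) - -Δ * stdNormalCDF (Real.sqrt S * (Δ / S - b0)) *
        stdNormalPDF ((Δ - μ) / τ))
        = fun Δ : ℝ => ∫ t in b0..β, Real.sqrt S * Δ *
            stdNormalPDF (Real.sqrt S * (Δ / S - t)) * stdNormalPDF ((Δ - μ) / τ) :=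
      funext fun Δ => stepA hS hτ μ b0 β Δ
    rw [hpt]
    rcases lt_or_gt_of_ne hβ with hlt | hgt
    · -- β < b0
      have h1 : ∀ Δ : ℝ, (∫ t in b0..β, Real.sqrt S * Δ *
          stdNormalPDF (Real.sqrt S * (Δ / S - t)) * stdNormalPDF ((Δ - μ) / τ))
          = -∫ t in Set.Ioc β b0, Real.sqrt S * Δ *
              stdNormalPDF (Real.sqrt S * (Δ / S - t)) * stdNormalPDF ((Δ - μ) / τ) := by
        intro Δ
        rw [intervalIntegral.integral_symm, intervalIntegral.integral_of_le hlt.le]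
      simp only [h1]
      rw [integral_neg, fubini_step hS hτ μ β b0]
      rw [intervalIntegral.integral_symm, intervalIntegral.integral_of_le hlt.le]
      congr 1
      exact setIntegral_congr_fun measurableSet_Ioc fun t _ => hginner t
    · -- b0 < β
      have h1 : ∀ Δ : ℝ, (∫ t in b0..β, Real.sqrt S * Δ *
          stdNormalPDF (Real.sqrt S * (Δ / S - t)) * stdNormalPDF ((Δ - μ) / τ))
          = ∫ t in Set.Ioc b0 β, Real.sqrt S * Δ *
              stdNormalPDF (Real.sqrt S * (Δ / S - t)) * stdNormalPDF ((Δ - μ) / τ) := by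
        intro Δ
        rw [intervalIntegral.integral_of_le hgt.le]
      simp only [h1]
      rw [fubini_step hS hτ μ b0 β]
      rw [intervalIntegral.integral_of_le hgt.le]
      exact setIntegral_congr_fun measurableSet_Ioc fun t _ => hginner t
  -- conclude positivity
  have hb0' : ∀ t : ℝ, t + μ/τ^2 = t - b0 := by intro t; rw [hb0]; ring
  rcases lt_or_gt_of_ne hβ with hlt | hgt
  · -- β < b0 : show 0 < r β - r b0 = ∫ b0..β g = -∫ β..b0 g
    have hneg : (∫ t in b0..β, g t) = -∫ t in β..b0, g t :=
      intervalIntegral.integral_symm _ _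
    have hpos : 0 < ∫ t in β..b0, -g t := by
      apply intervalIntegral.intervalIntegral_pos_of_pos_on (hgcont.neg.intervalIntegrable _ _) _ hlt
      intro t ht
      rw [hg]
      show 0 < -(Q t * (t + μ/τ^2))
      have h2 : t + μ/τ^2 < 0 := by rw [hb0' t]; linarith [ht.2]
      nlinarith [hQpos t]
    rw [intervalIntegral.integral_neg] at hpos
    have : 0 < r β - r b0 := by rw [key, hneg]; linarith
    linarith
  · have hpos : 0 < ∫ t in b0..β, g t := by
      apply intervalIntegral.intervalIntegral_pos_of_pos_on (hgcont.intervalIntegrable _ _) _ hgt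
      intro t ht
      rw [hg]
      have h2 : 0 < t + μ/τ^2 := by rw [hb0' t]; linarith [ht.1]
      exact mul_pos (hQpos t) h2
    have : 0 < r β - r b0 := by rw [key]; linarith
    linarith
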